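/- arXiv:2005.02126 — 7 statements merged into one kernel-verified Lean document; each statement's English description precedes it below -/
import Mathlib

section
/- Soundness of the robust semantics of discrete-time STL for infinite signals: for every STL formula φ over a finite set Y of variables, every infinite signal σ = u₀,u₁,… ∈ (ℝ^Y)^ω, and every k ∈ ℕ, if ρ(φ,σ,k) > 0 then (σ,k) ⊨ φ. -/
namespace STLpaper

/-- Discrete-time STL formulas over a set `Y` of variables:
`⊤ | y > c | y < c | ¬φ | φ ∨ φ' | 𝒳 φ | φ U_{[i,j]} φ'` with `i ≤ j`, `i j ∈ ℕ ∪ {+∞}`. -/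
inductive STL (Y : Type) : Type where
  | top : STL Y
  | gt : Y → ℝ → STL Y
  | lt : Y → ℝ → STL Y
  | neg : STL Y → STL Y
  | or : STL Y → STL Y → STL Y
  | next : STL Y → STL Y
  | untl : (i j : ℕ∞) → i ≤ j → STL Y → STL Y → STL Y

variable {Y : Type}

/-- The satisfaction relation `(σ, k) ⊨ φ` for an infinite signal `σ : ℕ → Y → ℝ`. -/
def Sat (σ : ℕ → Y → ℝ) : STL Y → ℕ → Prop
  | .top, _ => True
  | .gt y c, k => σ k y > c
  | .lt y c, k => σ k y < c
  | .neg φ, k => ¬ Sat σ φ k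
  | .or φ ψ, k => Sat σ φ k ∨ Sat σ ψ k
  | .next φ, k => Sat σ φ (k + 1)
  | .untl i j _ φ ψ, k =>
      ∃ l : ℕ, ((k : ℕ∞) + i ≤ (l : ℕ∞) ∧ (l : ℕ∞) ≤ (k : ℕ∞) + j) ∧
        Sat σ ψ l ∧ ∀ m : ℕ, k ≤ m → m ≤ l → Sat σ φ m

/-- The robust semantics `ρ(φ, σ, k) ∈ ℝ ∪ {±∞}` for an infinite signal `σ`. -/
noncomputable def Rob (σ : ℕ → Y → ℝ) : STL Y → ℕ → EReal
  | .top, _ => ⊤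
  | .gt y c, k => ((σ k y - c : ℝ) : EReal)
  | .lt y c, k => ((-(σ k y) + c : ℝ) : EReal)
  | .neg φ, k => - Rob σ φ k
  | .or φ ψ, k => max (Rob σ φ k) (Rob σ ψ k)
  | .next φ, k => Rob σ φ (k + 1)
  | .untl i j _ φ ψ, k =>
      ⨆ l ∈ {l : ℕ | (k : ℕ∞) + i ≤ (l : ℕ∞) ∧ (l : ℕ∞) ≤ (k : ℕ∞) + j},
        min (Rob σ ψ l) (⨅ m ∈ Finset.Icc k l, Rob σ φ m)

/-- Concatenation `σ · σ'` of a finite signal with an infinite one. -/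
def cat (σ : List (Y → ℝ)) (σ' : ℕ → Y → ℝ) : ℕ → Y → ℝ :=
  fun n => if h : n < σ.length then σ.get ⟨n, h⟩ else σ' (n - σ.length)

/-- Supremum finite semantics `⟦φ⟧_sup`. -/
def supSem (φ : STL Y) : Set (List (Y → ℝ)) :=
  {σ | ∃ σ' : ℕ → Y → ℝ, Sat (cat σ σ') φ 0}

/-- Infimum finite semantics `⟦φ⟧_inf`. -/
def infSem (φ : STL Y) : Set (List (Y → ℝ)) :=
  {σ | ∀ σ' : ℕ → Y → ℝ, Sat (cat σ σ') φ 0}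

/-- Upper end of the robust satisfaction interval `RoSI(φ, σ, k)`. -/
noncomputable def RoSIsup (φ : STL Y) (σ : List (Y → ℝ)) (k : ℕ) : EReal :=
  ⨆ σ' : ℕ → Y → ℝ, Rob (cat σ σ') φ k

/-- Lower end of the robust satisfaction interval `RoSI(φ, σ, k)`. -/
noncomputable def RoSIinf (φ : STL Y) (σ : List (Y → ℝ)) (k : ℕ) : EReal :=
  ⨅ σ' : ℕ → Y → ℝ, Rob (cat σ σ') φ k

/-- The inductively computed interval `[ρ](φ, σ, k)`, as a pair `(inf, sup)`. -/
noncomputable def finRob (σ : List (Y → ℝ)) : STL Y → ℕ → EReal × EReal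
  | .top, _ => (⊤, ⊤)
  | .gt y c, k =>
      if h : k < σ.length then
        (((σ.get ⟨k, h⟩ y - c : ℝ) : EReal), ((σ.get ⟨k, h⟩ y - c : ℝ) : EReal))
      else (⊥, ⊤)
  | .lt y c, k =>
      if h : k < σ.length then
        (((-(σ.get ⟨k, h⟩ y) + c : ℝ) : EReal), ((-(σ.get ⟨k, h⟩ y) + c : ℝ) : EReal))
      else (⊥, ⊤)
  | .neg φ, k => (- (finRob σ φ k).2, - (finRob σ φ k).1)
  | .or φ ψ, k =>
      (max (finRob σ φ k).1 (finRob σ ψ k).1, max (finRob σ φ k).2 (finRob σ ψ k).2)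
  | .next φ, k => finRob σ φ (k + 1)
  | .untl i j _ φ ψ, k =>
      (⨆ l ∈ {l : ℕ | (k : ℕ∞) + i ≤ (l : ℕ∞) ∧ (l : ℕ∞) ≤ (k : ℕ∞) + j},
          min ((finRob σ ψ l).1) (⨅ m ∈ Finset.Icc k l, (finRob σ φ m).1),
       ⨆ l ∈ {l : ℕ | (k : ℕ∞) + i ≤ (l : ℕ∞) ∧ (l : ℕ∞) ≤ (k : ℕ∞) + j},
          min ((finRob σ ψ l).2) (⨅ m ∈ Finset.Icc k l, (finRob σ φ m).2))

/- `0 < ρ → ⊨` alone is not inductive: negation turns it into `⊨ → 0 ≤ ρ`, so both are proved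
together. -/
theorem sat_of_rob_pos_and_rob_nonneg_of_sat (σ : ℕ → Y → ℝ) (φ : STL Y) :
    ∀ k, (0 < Rob σ φ k → Sat σ φ k) ∧ (Sat σ φ k → 0 ≤ Rob σ φ k) := by
  induction φ with
  | top => simp [Rob, Sat]
  | gt y c =>
    intro k
    simp only [Rob, Sat, EReal.coe_pos, EReal.coe_nonneg, sub_pos, sub_nonneg]
    exact ⟨id, le_of_lt⟩
  | lt y c =>
    intro k
    simp only [Rob, Sat, EReal.coe_pos, EReal.coe_nonneg, neg_add_eq_sub, sub_pos, sub_nonneg]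
    exact ⟨id, le_of_lt⟩
  | neg φ ih =>
    intro k
    simp only [Rob, Sat, EReal.neg_pos, EReal.neg_nonneg]
    exact ⟨fun hneg hsat => ((ih k).2 hsat).not_gt hneg, fun hns => not_lt.1 (mt (ih k).1 hns)⟩
  | or φ ψ ihφ ihψ =>
    intro k
    simp only [Rob, Sat, lt_max_iff, le_max_iff]
    exact ⟨Or.imp (ihφ k).1 (ihψ k).1, Or.imp (ihφ k).2 (ihψ k).2⟩
  | next φ ih => exact fun k => ih (k + 1)
  | untl i j _ φ ψ ihφ ihψ =>
    intro k
    constructor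
    · simp only [Rob, lt_biSup_iff, lt_min_iff]
      rintro ⟨l, hl, hψ, hφ⟩
      refine ⟨l, hl, (ihψ l).1 hψ, fun m hkm hml => (ihφ m).1 ?_⟩
      exact hφ.trans_le (iInf₂_le m (Finset.mem_Icc.2 ⟨hkm, hml⟩))
    · rintro ⟨l, hl, hψ, hφ⟩
      refine le_iSup₂_of_le l hl (le_min ((ihψ l).2 hψ) (le_iInf₂ fun m hm => ?_))
      obtain ⟨hkm, hml⟩ := Finset.mem_Icc.1 hm
      exact (ihφ m).2 (hφ m hkm hml)

end STLpaper

open STLpaper in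
theorem robust_soundness_infinite_general (Y : Type) (φ : STL Y)
    (σ : ℕ → Y → ℝ) (k : ℕ) (h : 0 < Rob σ φ k) : Sat σ φ k :=
  (sat_of_rob_pos_and_rob_nonneg_of_sat σ φ k).1 h

open STLpaper in
/-- Soundness of the robust semantics for infinite signals:
if `ρ(φ,σ,k) > 0` then `(σ,k) ⊨ φ`. -/
theorem robust_soundness_infinite (Y : Type) [Fintype Y] (φ : STL Y)
    (σ : ℕ → Y → ℝ) (k : ℕ) (h : 0 < Rob σ φ k) : Sat σ φ k :=
  robust_soundness_infinite_general Y φ σ k h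
end

section
/- Completeness of the robust semantics of discrete-time STL for infinite signals: for every STL formula φ over a finite set Y of variables, every infinite signal σ = u₀,u₁,… ∈ (ℝ^Y)^ω, and every k ∈ ℕ, if (σ,k) ⊨ φ then ρ(φ,σ,k) ≥ 0. -/
/-!
Completeness alone is not preserved by negation, so it is proved by structural induction together
with its dual: at a point where `φ` fails, `ρ(φ, σ, k) ≤ 0`. For the until operator, a witness `l`
of satisfaction makes its own term of the supremum nonnegative; if the until fails, every term of
the supremum has either `ψ` failing at `l` or `φ` failing at some `m ∈ [k, l]`, hence is `≤ 0`.
-/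

namespace STLpaper

variable {Y : Type} (σ : ℕ → Y → ℝ)

def RobSignAgrees (φ : STL Y) : Prop :=
  ∀ k, (Sat σ φ k → 0 ≤ Rob σ φ k) ∧ (¬ Sat σ φ k → Rob σ φ k ≤ 0)

variable {σ}

theorem robSignAgrees_top : RobSignAgrees σ .top :=
  fun _ => ⟨fun _ => le_top, fun h => absurd trivial h⟩

theorem robSignAgrees_gt (y : Y) (c : ℝ) : RobSignAgrees σ (.gt y c) := fun k => by
  simp only [Sat, Rob, gt_iff_lt, not_lt, EReal.coe_nonneg, EReal.coe_nonpos]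
  constructor <;> intro h <;> linarith

theorem robSignAgrees_lt (y : Y) (c : ℝ) : RobSignAgrees σ (.lt y c) := fun k => by
  simp only [Sat, Rob, not_lt, EReal.coe_nonneg, EReal.coe_nonpos]
  constructor <;> intro h <;> linarith

theorem RobSignAgrees.neg {φ : STL Y} (hφ : RobSignAgrees σ φ) : RobSignAgrees σ (.neg φ) :=
  fun k => ⟨fun h => EReal.neg_nonneg.mpr ((hφ k).2 h),
    fun h => EReal.neg_le_zero.mpr ((hφ k).1 (not_not.mp h))⟩

theorem RobSignAgrees.or {φ ψ : STL Y} (hφ : RobSignAgrees σ φ) (hψ : RobSignAgrees σ ψ) :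
    RobSignAgrees σ (.or φ ψ) := fun k =>
  ⟨fun h => h.elim (fun h => le_max_of_le_left ((hφ k).1 h))
      (fun h => le_max_of_le_right ((hψ k).1 h)),
    fun h => by
      rw [Sat, not_or] at h
      exact max_le ((hφ k).2 h.1) ((hψ k).2 h.2)⟩

theorem RobSignAgrees.next {φ : STL Y} (hφ : RobSignAgrees σ φ) : RobSignAgrees σ (.next φ) :=
  fun k => hφ (k + 1)

theorem RobSignAgrees.untl {φ ψ : STL Y} (i j : ℕ∞) (hij : i ≤ j) (hφ : RobSignAgrees σ φ)
    (hψ : RobSignAgrees σ ψ) : RobSignAgrees σ (.untl i j hij φ ψ) := by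
  intro k
  constructor
  · rintro ⟨l, hl, hψl, hφl⟩
    refine le_trans ?_ (le_iSup₂ (f := fun l _ =>
      min (Rob σ ψ l) (⨅ m ∈ Finset.Icc k l, Rob σ φ m)) l hl)
    refine le_min ((hψ l).1 hψl) (le_iInf₂ fun m hm => ?_)
    rw [Finset.mem_Icc] at hm
    exact (hφ m).1 (hφl m hm.1 hm.2)
  · intro h
    refine iSup₂_le fun l hl => ?_
    by_cases hψl : Sat σ ψ l
    · obtain ⟨m, hkm, hml, hφm⟩ : ∃ m, k ≤ m ∧ m ≤ l ∧ ¬ Sat σ φ m := by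
        by_contra! hall
        exact h ⟨l, hl, hψl, hall⟩
      calc min (Rob σ ψ l) (⨅ m ∈ Finset.Icc k l, Rob σ φ m)
          ≤ Rob σ φ m := (min_le_right _ _).trans
            (iInf₂_le m (Finset.mem_Icc.mpr ⟨hkm, hml⟩))
        _ ≤ 0 := (hφ m).2 hφm
    · exact (min_le_left _ _).trans ((hψ l).2 hψl)

theorem robSignAgrees (φ : STL Y) : RobSignAgrees σ φ := by
  induction φ with
  | top => exact robSignAgrees_top
  | gt y c => exact robSignAgrees_gt y c
  | lt y c => exact robSignAgrees_lt y c
  | neg φ hφ => exact hφ.neg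
  | or φ ψ hφ hψ => exact hφ.or hψ
  | next φ hφ => exact hφ.next
  | untl i j hij φ ψ hφ hψ => exact hφ.untl i j hij hψ

end STLpaper

open STLpaper in
theorem robust_completeness_infinite_general (Y : Type) (φ : STL Y)
    (σ : ℕ → Y → ℝ) (k : ℕ) (h : Sat σ φ k) : 0 ≤ Rob σ φ k :=
  (robSignAgrees φ k).1 h

open STLpaper in
/-- Completeness of the robust semantics for infinite signals:
if `(σ,k) ⊨ φ` then `ρ(φ,σ,k) ≥ 0`. -/
theorem robust_completeness_infinite (Y : Type) [Fintype Y] (φ : STL Y)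
    (σ : ℕ → Y → ℝ) (k : ℕ) (h : Sat σ φ k) : 0 ≤ Rob σ φ k :=
  robust_completeness_infinite_general Y φ σ k h
end

section
/- Soundness of the upper end of the robust satisfaction interval: for every STL formula φ over a finite set Y of variables, every finite signal σ = u₀,…,u_{n−1} ∈ (ℝ^Y)^*, and every k ∈ ℕ, if sup(RoSI(φ,σ,k)) > 0 then the suffix σ[k..|σ|−1] belongs to the supremum finite semantics ⟦φ⟧_sup. -/
namespace STLpaper

variable {Y : Type}

/-!
A positive robustness value witnesses satisfaction: by induction on `φ`, proved together with
the dual fact that a negative value witnesses violation, which the negation case needs.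
So `0 < sup RoSI(φ, σ, k)` provides a continuation `σ'` with `(σ·σ', k) ⊨ φ`. Satisfaction is
invariant under moving the time origin, and the suffix of `σ·σ'` from `k` is `σ[k..]·τ` for
a suitable `τ`, so `σ[k..]·τ ⊨ φ`.
-/

def window (i j : ℕ∞) (k : ℕ) : Set ℕ :=
  {l : ℕ | (k : ℕ∞) + i ≤ (l : ℕ∞) ∧ (l : ℕ∞) ≤ (k : ℕ∞) + j}

lemma le_of_mem_window {i j : ℕ∞} {k l : ℕ} (hl : l ∈ window i j k) : k ≤ l := by
  exact_mod_cast le_trans le_self_add hl.1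

lemma add_mem_window_add_iff {i j : ℕ∞} {k l : ℕ} (n : ℕ) :
    l + n ∈ window i j (k + n) ↔ l ∈ window i j k := by
  simp only [window, Set.mem_ofPred_eq, Nat.cast_add, add_right_comm _ (n : ℕ∞),
    ENat.add_le_add_iff_right (ENat.natCast_ne_top n)]

lemma sat_shift_iff (ρ : ℕ → Y → ℝ) (n : ℕ) (φ : STL Y) (k : ℕ) :
    Sat (fun t => ρ (t + n)) φ k ↔ Sat ρ φ (k + n) := by
  induction φ generalizing k with
  | top | gt | lt => simp only [Sat]
  | neg φ ih => simp only [Sat, ih]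
  | or φ ψ ih₁ ih₂ => simp only [Sat, ih₁, ih₂]
  | next φ ih => simp only [Sat, ih, Nat.add_right_comm k 1 n]
  | untl i j _ φ ψ ih₁ ih₂ =>
    change (∃ l ∈ window i j k, _) ↔ (∃ l ∈ window i j (k + n), _)
    constructor
    · rintro ⟨l, hl, hψ, hφ⟩
      refine ⟨l + n, (add_mem_window_add_iff n).2 hl, (ih₂ l).1 hψ, fun m hkm hml => ?_⟩
      obtain ⟨m, rfl⟩ := Nat.exists_eq_add_of_le' (le_trans (Nat.le_add_left n k) hkm)
      exact (ih₁ m).1 (hφ m (by omega) (by omega))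
    · rintro ⟨l, hl, hψ, hφ⟩
      obtain ⟨l, rfl⟩ :=
        Nat.exists_eq_add_of_le' (le_trans (Nat.le_add_left n k) (le_of_mem_window hl))
      exact ⟨l, (add_mem_window_add_iff n).1 hl, (ih₂ l).2 hψ,
        fun m hkm hml => (ih₁ m).2 (hφ (m + n) (by omega) (by omega))⟩

section Until

variable {σ : ℕ → Y → ℝ} {i j : ℕ∞} {hij : i ≤ j} {φ ψ : STL Y} {k : ℕ}

lemma exists_of_rob_untl_pos (h : 0 < Rob σ (.untl i j hij φ ψ) k) :
    ∃ l ∈ window i j k, 0 < Rob σ ψ l ∧ ∀ m ∈ Finset.Icc k l, 0 < Rob σ φ m := by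
  obtain ⟨l, hl, hmin⟩ := lt_biSup_iff.mp h
  obtain ⟨hψ, hφ⟩ := lt_min_iff.mp hmin
  exact ⟨l, hl, hψ, fun m hm => hφ.trans_le (iInf₂_le m hm)⟩

lemma forall_of_rob_untl_neg (h : Rob σ (.untl i j hij φ ψ) k < 0) :
    ∀ l ∈ window i j k, Rob σ ψ l < 0 ∨ ∃ m ∈ Finset.Icc k l, Rob σ φ m < 0 := by
  intro l hl
  have hmin : min (Rob σ ψ l) (⨅ m ∈ Finset.Icc k l, Rob σ φ m) < 0 :=
    (le_iSup₂ (f := fun l (_ : l ∈ window i j k) =>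
      min (Rob σ ψ l) (⨅ m ∈ Finset.Icc k l, Rob σ φ m)) l hl).trans_lt h
  exact (min_lt_iff.mp hmin).imp_right fun h => by simpa only [iInf_lt_iff, exists_prop] using h

end Until

lemma sat_of_rob_pos_and_not_sat_of_rob_neg (φ : STL Y) (σ : ℕ → Y → ℝ) (k : ℕ) :
    (0 < Rob σ φ k → Sat σ φ k) ∧ (Rob σ φ k < 0 → ¬ Sat σ φ k) := by
  induction φ generalizing k with
  | top => simp [Rob, Sat]
  | gt | lt =>
    simp only [Rob, Sat, EReal.coe_pos, EReal.coe_neg', not_lt]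
    constructor <;> intro <;> linarith
  | neg φ ih =>
    simp only [Rob, Sat, EReal.neg_pos, EReal.neg_lt_zero, not_not]
    exact ⟨(ih k).2, (ih k).1⟩
  | or φ ψ ih₁ ih₂ =>
    simp only [Rob, Sat, lt_max_iff, max_lt_iff, not_or]
    exact ⟨Or.imp (ih₁ k).1 (ih₂ k).1, fun h => ⟨(ih₁ k).2 h.1, (ih₂ k).2 h.2⟩⟩
  | next φ ih => exact ih (k + 1)
  | untl i j _ φ ψ ih₁ ih₂ =>
    constructor
    · intro h
      obtain ⟨l, hl, hψ, hφ⟩ := exists_of_rob_untl_pos h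
      exact ⟨l, hl, (ih₂ l).1 hψ,
        fun m hkm hml => (ih₁ m).1 (hφ m (Finset.mem_Icc.mpr ⟨hkm, hml⟩))⟩
    · rintro h ⟨l, hl, hψ, hφ⟩
      rcases forall_of_rob_untl_neg h l hl with hψneg | ⟨m, hm, hφneg⟩
      · exact (ih₂ l).2 hψneg hψ
      · obtain ⟨hkm, hml⟩ := Finset.mem_Icc.mp hm
        exact (ih₁ m).2 hφneg (hφ m hkm hml)

lemma cat_drop_eq_shift (σ : List (Y → ℝ)) (σ' : ℕ → Y → ℝ) (k : ℕ) :
    cat (σ.drop k) (fun t => cat σ σ' (t + (σ.drop k).length + k))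
      = fun t => cat σ σ' (t + k) := by
  funext t
  by_cases ht : t < σ.length - k
  · have htk : t + k < σ.length := by omega
    simp only [cat, List.length_drop, dif_pos ht, dif_pos htk, List.get_eq_getElem,
      List.getElem_drop, Nat.add_comm k t]
  · have harg : t - (σ.length - k) + (σ.length - k) + k = t + k := by omega
    simp only [cat, List.length_drop, dif_neg ht, harg]

end STLpaper

open STLpaper in
theorem RoSIsup_pos_mem_supSem_general (Y : Type) (φ : STL Y)
    (σ : List (Y → ℝ)) (k : ℕ) (h : 0 < RoSIsup φ σ k) :
    σ.drop k ∈ supSem φ := by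
  obtain ⟨σ', hrob⟩ := lt_iSup_iff.mp h
  have hsat : Sat (cat σ σ') φ k := (sat_of_rob_pos_and_not_sat_of_rob_neg φ _ k).1 hrob
  refine ⟨fun t => cat σ σ' (t + (σ.drop k).length + k), ?_⟩
  rw [cat_drop_eq_shift, sat_shift_iff, zero_add]
  exact hsat

open STLpaper in
/-- Soundness of the upper end of the robust satisfaction interval:
if `sup(RoSI(φ,σ,k)) > 0` then `σ[k..|σ|−1] ∈ ⟦φ⟧_sup`. -/
theorem RoSIsup_pos_mem_supSem (Y : Type) [Fintype Y] (φ : STL Y)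
    (σ : List (Y → ℝ)) (k : ℕ) (h : 0 < RoSIsup φ σ k) :
    σ.drop k ∈ supSem φ :=
  RoSIsup_pos_mem_supSem_general Y φ σ k h
end

section
/- Completeness of the lower end of the robust satisfaction interval: for every STL formula φ over a finite set Y of variables, every finite signal σ = u₀,…,u_{n−1} ∈ (ℝ^Y)^*, and every k ∈ ℕ, if the suffix σ[k..|σ|−1] belongs to the infimum finite semantics ⟦φ⟧_inf then inf(RoSI(φ,σ,k)) ≥ 0. -/
/-!
A satisfied formula has nonnegative robustness and a violated one nonpositive robustness,
by a simultaneous induction on the formula (negation swaps the two halves). Robustness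
only looks forward in time, so shifting the signal by `k` shifts the evaluation time by `k`;
and every continuation of `σ` shifted by `k` is a continuation of `σ.drop k`. Hence each
infinite extension `σ · σ'` satisfies `φ` at time `k`, and its robustness there is `≥ 0`.
-/

namespace STLpaper

variable {Y : Type}

lemma image_const_add_window (k m : ℕ) (i j : ℕ∞) :
    (k + ·) '' {l : ℕ | (m : ℕ∞) + i ≤ l ∧ (l : ℕ∞) ≤ m + j} =
      {l : ℕ | ((k + m : ℕ) : ℕ∞) + i ≤ l ∧ (l : ℕ∞) ≤ (k + m : ℕ) + j} := by
  have cancel (a b : ℕ∞) : (k : ℕ∞) + a ≤ k + b ↔ a ≤ b :=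
    ENat.add_le_add_iff_left (ENat.natCast_ne_top k)
  ext l
  constructor
  · rintro ⟨l, ⟨hil, hlj⟩, rfl⟩
    simp only [Set.mem_ofPred_eq, Nat.cast_add, add_assoc, cancel]
    exact ⟨hil, hlj⟩
  · rintro ⟨hil, hlj⟩
    have hkl : k ≤ l := by
      have : (k : ℕ∞) ≤ l := le_trans (by push_cast; exact le_add_right le_self_add) hil
      exact_mod_cast this
    obtain ⟨d, rfl⟩ := Nat.exists_eq_add_of_le hkl
    refine ⟨d, ?_, rfl⟩
    simpa only [Set.mem_ofPred_eq, Nat.cast_add, add_assoc, cancel] using And.intro hil hlj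

lemma iInf_Icc_const_add (f : ℕ → EReal) (k a b : ℕ) :
    ⨅ x ∈ Finset.Icc a b, f (k + x) = ⨅ x ∈ Finset.Icc (k + a) (k + b), f x := by
  rw [← Finset.iInf_coe, ← Finset.iInf_coe, Finset.coe_Icc, Finset.coe_Icc,
    ← Set.image_const_add_Icc, iInf_image]

lemma rob_shift (σ : ℕ → Y → ℝ) (k : ℕ) (φ : STL Y) (m : ℕ) :
    Rob (fun n => σ (k + n)) φ m = Rob σ φ (k + m) := by
  induction φ generalizing m with
  | top | gt | lt => rfl
  | neg φ ih => simp only [Rob, ih]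
  | or φ ψ ih₁ ih₂ => simp only [Rob, ih₁, ih₂]
  | next φ ih => simp only [Rob, ih, add_assoc]
  | untl i j _ φ ψ ih₁ ih₂ =>
      simp only [Rob, ih₁, ih₂, iInf_Icc_const_add (Rob σ φ), ← image_const_add_window,
        iSup_image]

-- `k - σ.length` is `0` unless `k` lies beyond the end of `σ`.
lemma cat_drop (σ : List (Y → ℝ)) (σ' : ℕ → Y → ℝ) (k : ℕ) :
    cat (σ.drop k) (fun n => σ' (n + (k - σ.length))) = fun n => cat σ σ' (k + n) := by
  funext n
  simp only [cat, List.length_drop, List.get_eq_getElem, List.getElem_drop]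
  by_cases hn : n < σ.length - k
  · rw [dif_pos hn, dif_pos (by omega)]
  · rw [dif_neg hn, dif_neg (by omega)]
    congr 1
    omega

lemma rob_sign_of_sat (σ : ℕ → Y → ℝ) (φ : STL Y) (k : ℕ) :
    (Sat σ φ k → 0 ≤ Rob σ φ k) ∧ (¬ Sat σ φ k → Rob σ φ k ≤ 0) := by
  induction φ generalizing k with
  | top => exact ⟨fun _ => le_top, fun h => absurd trivial h⟩
  | gt y c =>
      simp only [Sat, Rob, gt_iff_lt, not_lt, EReal.coe_nonneg, EReal.coe_nonpos]
      exact ⟨fun h => by linarith, fun h => by linarith⟩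
  | lt y c =>
      simp only [Sat, Rob, not_lt, EReal.coe_nonneg, EReal.coe_nonpos]
      exact ⟨fun h => by linarith, fun h => by linarith⟩
  | neg φ ih =>
      simp only [Sat, Rob, not_not, EReal.neg_nonneg, EReal.neg_le_zero]
      exact (ih k).symm
  | or φ ψ ih₁ ih₂ =>
      simp only [Sat, Rob, not_or, le_max_iff, max_le_iff]
      exact ⟨Or.imp (ih₁ k).1 (ih₂ k).1, And.imp (ih₁ k).2 (ih₂ k).2⟩
  | next φ ih => exact ih (k + 1)
  | untl i j _ φ ψ ih₁ ih₂ =>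
      constructor
      · rintro ⟨l, hl, hψ, hφ⟩
        refine le_iSup₂_of_le l hl (le_min ((ih₂ l).1 hψ) (le_iInf₂ fun m hm => ?_))
        obtain ⟨hkm, hml⟩ := Finset.mem_Icc.mp hm
        exact (ih₁ m).1 (hφ m hkm hml)
      · intro h
        simp only [Sat, not_exists, not_and, not_forall] at h
        refine iSup₂_le fun l hl => ?_
        by_cases hψ : Sat σ ψ l
        · obtain ⟨m, hkm, hml, hφ⟩ := h l hl hψ
          calc min (Rob σ ψ l) (⨅ m ∈ Finset.Icc k l, Rob σ φ m)
              ≤ Rob σ φ m := min_le_of_right_le (iInf₂_le m (Finset.mem_Icc.mpr ⟨hkm, hml⟩))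
            _ ≤ 0 := (ih₁ m).2 hφ
        · exact min_le_of_left_le ((ih₂ l).2 hψ)

end STLpaper

open STLpaper in
theorem mem_infSem_RoSIinf_nonneg_general (Y : Type) (φ : STL Y)
    (σ : List (Y → ℝ)) (k : ℕ) (h : σ.drop k ∈ infSem φ) :
    0 ≤ RoSIinf φ σ k := by
  refine le_iInf fun σ' => ?_
  have hsat : Sat (fun n => cat σ σ' (k + n)) φ 0 := cat_drop σ σ' k ▸ h _
  simpa only [rob_shift, add_zero] using (rob_sign_of_sat _ φ 0).1 hsat

open STLpaper in
/-- Completeness of the lower end of the robust satisfaction interval: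
if `σ[k..|σ|−1] ∈ ⟦φ⟧_inf` then `inf(RoSI(φ,σ,k)) ≥ 0`. -/
theorem mem_infSem_RoSIinf_nonneg (Y : Type) [Fintype Y] (φ : STL Y)
    (σ : List (Y → ℝ)) (k : ℕ) (h : σ.drop k ∈ infSem φ) :
    0 ≤ RoSIinf φ σ k :=
  mem_infSem_RoSIinf_nonneg_general Y φ σ k h
end

section
/- The inductively computed interval [ρ](φ,σ,k) overapproximates the robust satisfaction interval: for every STL formula φ over a finite set Y of variables, every finite signal σ = u₀,…,u_{n−1} ∈ (ℝ^Y)^*, and every k ∈ ℕ, RoSI(φ,σ,k) ⊆ [ρ](φ,σ,k); equivalently, inf([ρ](φ,σ,k)) ≤ inf(RoSI(φ,σ,k)) and sup(RoSI(φ,σ,k)) ≤ sup([ρ](φ,σ,k)). -/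
/-!
Every clause of `[ρ]` is monotone in the intervals it combines, and an atomic formula gets its
exact value inside `σ` and the trivial interval `[⊥, ⊤]` beyond it. So by structural induction
`ρ(φ, σ·σ', k) ∈ [ρ](φ, σ, k)` for every continuation `σ'`, and the claim follows by taking the
infimum and supremum over `σ'`.
-/

namespace STLpaper

variable {Y : Type}

theorem rob_cat_mem_finRob (σ : List (Y → ℝ)) (σ' : ℕ → Y → ℝ) (φ : STL Y) (k : ℕ) :
    Rob (cat σ σ') φ k ∈ Set.Icc (finRob σ φ k).1 (finRob σ φ k).2 := by
  induction φ generalizing k with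
  | top => simp [finRob, Rob]
  | gt y c => by_cases h : k < σ.length <;> simp [finRob, Rob, cat, h]
  | lt y c => by_cases h : k < σ.length <;> simp [finRob, Rob, cat, h]
  | neg φ ih => exact ⟨EReal.neg_le_neg_iff.2 (ih k).2, EReal.neg_le_neg_iff.2 (ih k).1⟩
  | or φ ψ ihφ ihψ => exact ⟨max_le_max (ihφ k).1 (ihψ k).1, max_le_max (ihφ k).2 (ihψ k).2⟩
  | next φ ih => exact ih (k + 1)
  | untl i j _ φ ψ ihφ ihψ =>
      exact ⟨iSup₂_mono fun l _ => min_le_min (ihψ l).1 (iInf₂_mono fun m _ => (ihφ m).1),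
        iSup₂_mono fun l _ => min_le_min (ihψ l).2 (iInf₂_mono fun m _ => (ihφ m).2)⟩

end STLpaper

open STLpaper in
theorem RoSI_subset_finRob_general (Y : Type) (φ : STL Y)
    (σ : List (Y → ℝ)) (k : ℕ) :
    (finRob σ φ k).1 ≤ RoSIinf φ σ k ∧ RoSIsup φ σ k ≤ (finRob σ φ k).2 :=
  ⟨le_iInf fun σ' => (rob_cat_mem_finRob σ σ' φ k).1,
    iSup_le fun σ' => (rob_cat_mem_finRob σ σ' φ k).2⟩

open STLpaper in
/-- The inductively computed interval `[ρ](φ,σ,k)` overapproximates `RoSI(φ,σ,k)`: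
`inf([ρ](φ,σ,k)) ≤ inf(RoSI(φ,σ,k))` and `sup(RoSI(φ,σ,k)) ≤ sup([ρ](φ,σ,k))`. -/
theorem RoSI_subset_finRob (Y : Type) [Fintype Y] (φ : STL Y)
    (σ : List (Y → ℝ)) (k : ℕ) :
    (finRob σ φ k).1 ≤ RoSIinf φ σ k ∧ RoSIsup φ σ k ≤ (finRob σ φ k).2 :=
  RoSI_subset_finRob_general Y φ σ k
end

section
/- Upper bound for the robust satisfaction interval of the until operator: for all STL formulas φ, φ' over a finite set Y of variables, every finite signal σ ∈ (ℝ^Y)^*, every k ∈ ℕ, and all i,j ∈ ℕ ∪ {+∞} with i ≤ j, sup(RoSI(φ U_{[i,j]} φ', σ, k)) ≤ sup_{l∈{k+i,…,k+j}} min( sup(RoSI(φ',σ,l)), min_{m∈{k,…,l}} sup(RoSI(φ,σ,m)) ). -/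
namespace STLpaper

variable {Y : Type}

theorem Rob_untl (σ : ℕ → Y → ℝ) (i j : ℕ∞) (hij : i ≤ j) (φ φ' : STL Y) (k : ℕ) :
    Rob σ (.untl i j hij φ φ') k =
      ⨆ l ∈ {l : ℕ | (k : ℕ∞) + i ≤ (l : ℕ∞) ∧ (l : ℕ∞) ≤ (k : ℕ∞) + j},
        min (Rob σ φ' l) (⨅ m ∈ Finset.Icc k l, Rob σ φ m) := by
  rw [Rob]

theorem Rob_cat_le_RoSIsup (φ : STL Y) (σ : List (Y → ℝ)) (σ' : ℕ → Y → ℝ) (k : ℕ) :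
    Rob (cat σ σ') φ k ≤ RoSIsup φ σ k :=
  le_iSup (fun τ => Rob (cat σ τ) φ k) σ'

end STLpaper

open STLpaper in
theorem RoSIsup_until_le_general (Y : Type) (φ φ' : STL Y) (σ : List (Y → ℝ))
    (k : ℕ) (i j : ℕ∞) (hij : i ≤ j) :
    RoSIsup (STL.untl i j hij φ φ') σ k ≤
      ⨆ l ∈ {l : ℕ | (k : ℕ∞) + i ≤ (l : ℕ∞) ∧ (l : ℕ∞) ≤ (k : ℕ∞) + j},
        min (RoSIsup φ' σ l) (⨅ m ∈ Finset.Icc k l, RoSIsup φ σ m) := by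
  refine iSup_le fun σ' => ?_
  rw [Rob_untl]
  exact iSup₂_mono fun l _ => min_le_min (Rob_cat_le_RoSIsup φ' σ σ' l)
    (iInf₂_mono fun m _ => Rob_cat_le_RoSIsup φ σ σ' m)

open STLpaper in
/-- Upper bound for the robust satisfaction interval of the until operator. -/
theorem RoSIsup_until_le (Y : Type) [Fintype Y] (φ φ' : STL Y) (σ : List (Y → ℝ))
    (k : ℕ) (i j : ℕ∞) (hij : i ≤ j) :
    RoSIsup (STL.untl i j hij φ φ') σ k ≤
      ⨆ l ∈ {l : ℕ | (k : ℕ∞) + i ≤ (l : ℕ∞) ∧ (l : ℕ∞) ≤ (k : ℕ∞) + j},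
        min (RoSIsup φ' σ l) (⨅ m ∈ Finset.Icc k l, RoSIsup φ σ m) :=
  RoSIsup_until_le_general Y φ φ' σ k i j hij
end

section
/- Lower bound for the robust satisfaction interval of the until operator: for all STL formulas φ, φ' over a finite set Y of variables, every finite signal σ ∈ (ℝ^Y)^*, every k ∈ ℕ, and all i,j ∈ ℕ ∪ {+∞} with i ≤ j, inf(RoSI(φ U_{[i,j]} φ', σ, k)) ≥ sup_{l∈{k+i,…,k+j}} min( inf(RoSI(φ',σ,l)), min_{m∈{k,…,l}} inf(RoSI(φ,σ,m)) ). -/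
namespace STLpaper

variable {Y : Type}

theorem RoSIinf_le_Rob (φ : STL Y) (σ : List (Y → ℝ)) (σ' : ℕ → Y → ℝ) (k : ℕ) :
    RoSIinf φ σ k ≤ Rob (cat σ σ') φ k :=
  iInf_le _ σ'

theorem iSup_min_iInf_Icc_mono {α : Type*} [CompleteLinearOrder α] {f f' g g' : ℕ → α}
    (hf : f ≤ g) (hf' : f' ≤ g') (k : ℕ) (I : Set ℕ) :
    (⨆ l ∈ I, min (f' l) (⨅ m ∈ Finset.Icc k l, f m)) ≤
      ⨆ l ∈ I, min (g' l) (⨅ m ∈ Finset.Icc k l, g m) :=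
  iSup₂_mono fun l _ => min_le_min (hf' l) (iInf₂_mono fun m _ => hf m)

end STLpaper

open STLpaper in
theorem RoSIinf_until_ge_general (Y : Type) (φ φ' : STL Y) (σ : List (Y → ℝ))
    (k : ℕ) (i j : ℕ∞) (hij : i ≤ j) :
    (⨆ l ∈ {l : ℕ | (k : ℕ∞) + i ≤ (l : ℕ∞) ∧ (l : ℕ∞) ≤ (k : ℕ∞) + j},
        min (RoSIinf φ' σ l) (⨅ m ∈ Finset.Icc k l, RoSIinf φ σ m)) ≤
      RoSIinf (STL.untl i j hij φ φ') σ k :=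
  le_iInf fun σ' =>
    iSup_min_iInf_Icc_mono (RoSIinf_le_Rob φ σ σ') (RoSIinf_le_Rob φ' σ σ') k _

open STLpaper in
/-- Lower bound for the robust satisfaction interval of the until operator. -/
theorem RoSIinf_until_ge (Y : Type) [Fintype Y] (φ φ' : STL Y) (σ : List (Y → ℝ))
    (k : ℕ) (i j : ℕ∞) (hij : i ≤ j) :
    (⨆ l ∈ {l : ℕ | (k : ℕ∞) + i ≤ (l : ℕ∞) ∧ (l : ℕ∞) ≤ (k : ℕ∞) + j},
        min (RoSIinf φ' σ l) (⨅ m ∈ Finset.Icc k l, RoSIinf φ σ m)) ≤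
      RoSIinf (STL.untl i j hij φ φ') σ k :=
  RoSIinf_until_ge_general Y φ φ' σ k i j hij
end
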